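/- arXiv:1606.03253 — 4 statements merged into one kernel-verified Lean document; each statement's English description precedes it below -/
import Mathlib

section
/- Let $\eta_1(\epsilon), \eta_2(\epsilon) \geq 0$ and $a_{12}(\epsilon), a_{21}(\epsilon), b_{12}(\epsilon), b_{21}(\epsilon) > 0$ with $a_{12}(\epsilon)/b_{12}(\epsilon) \to 1$ and $a_{21}(\epsilon)/b_{21}(\epsilon) \to 1$ as $\epsilon \to 0$. Let $\lambda^a(\epsilon)$ and $\lambda^b(\epsilon)$ be the Perron eigenvalues of $\begin{pmatrix} \eta_1 & a_{12} \\ a_{21} & \eta_2 \end{pmatrix}$ and $\begin{pmatrix} \eta_1 & b_{12} \\ b_{21} & \eta_2 \end{pmatrix}$ respectively. Then $\frac{\lambda^a(\epsilon) - \eta_i(\epsilon)}{\lambda^b(\epsilon) - \eta_i(\epsilon)} \to 1$ as $\epsilon \to 0$ for $i = 1, 2$. -/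
open Filter Set
open scoped Topology

private lemma sqrt_gt (d x : ℝ) (hx : 0 < x) : d < Real.sqrt (d ^ 2 + 4 * x) := by
  refine lt_of_le_of_lt (le_abs_self d) ?_
  rw [← Real.sqrt_sq_eq_abs]
  exact Real.sqrt_lt_sqrt (sq_nonneg d) (by linarith)

private lemma aux_le (d a b : ℝ) (ha : 0 < a) (hab : a ≤ b) :
    a / b ≤ (Real.sqrt (d ^ 2 + 4 * a) - d) / (Real.sqrt (d ^ 2 + 4 * b) - d) ∧
    (Real.sqrt (d ^ 2 + 4 * a) - d) / (Real.sqrt (d ^ 2 + 4 * b) - d) ≤ 1 := by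
  have hb : 0 < b := ha.trans_le hab
  set sa := Real.sqrt (d ^ 2 + 4 * a) with hsa
  set sb := Real.sqrt (d ^ 2 + 4 * b) with hsb
  have hsa2 : sa ^ 2 = d ^ 2 + 4 * a := Real.sq_sqrt (by nlinarith)
  have hsb2 : sb ^ 2 = d ^ 2 + 4 * b := Real.sq_sqrt (by nlinarith)
  have hda : d < sa := sqrt_gt d a ha
  have hdb : d < sb := sqrt_gt d b hb
  have hda' : 0 < sa + d := by
    have : |d| < sa := by
      rw [hsa, ← Real.sqrt_sq_eq_abs]
      exact Real.sqrt_lt_sqrt (sq_nonneg d) (by linarith)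
    cases abs_lt.mp this; linarith
  have hdb' : 0 < sb + d := by
    have : |d| < sb := by
      rw [hsb, ← Real.sqrt_sq_eq_abs]
      exact Real.sqrt_lt_sqrt (sq_nonneg d) (by linarith)
    cases abs_lt.mp this; linarith
  have hsasb : sa ≤ sb := Real.sqrt_le_sqrt (by linarith)
  have eA : sa - d = 4 * a / (sa + d) := by
    rw [eq_div_iff (ne_of_gt hda')]; linear_combination hsa2
  have eB : sb - d = 4 * b / (sb + d) := by
    rw [eq_div_iff (ne_of_gt hdb')]; linear_combination hsb2
  constructor
  · rw [div_le_div_iff₀ hb (by linarith)]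
    have e1 : a * (sb - d) = 4 * (a * b) / (sb + d) := by rw [eB]; ring
    have e2 : (sa - d) * b = 4 * (a * b) / (sa + d) := by rw [eA]; ring
    rw [e1, e2]
    gcongr
  · rw [div_le_one (by linarith)]; linarith

private lemma aux2 (d a b : ℝ) (ha : 0 < a) (hb : 0 < b) :
    min (a / b) 1 ≤ (Real.sqrt (d ^ 2 + 4 * a) - d) / (Real.sqrt (d ^ 2 + 4 * b) - d) ∧
    (Real.sqrt (d ^ 2 + 4 * a) - d) / (Real.sqrt (d ^ 2 + 4 * b) - d) ≤ max (a / b) 1 := by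
  have hda : (0:ℝ) < Real.sqrt (d ^ 2 + 4 * a) - d := sub_pos.mpr (sqrt_gt d a ha)
  have hdb : (0:ℝ) < Real.sqrt (d ^ 2 + 4 * b) - d := sub_pos.mpr (sqrt_gt d b hb)
  rcases le_total a b with hab | hba
  · obtain ⟨h1, h2⟩ := aux_le d a b ha hab
    exact ⟨le_trans (min_le_left _ _) h1, le_trans h2 (le_max_right _ _)⟩
  · obtain ⟨h1, h2⟩ := aux_le d b a hb hba
    constructor
    · refine le_trans (min_le_right _ _) ?_
      rw [le_div_iff₀ hdb, one_mul]
      rw [div_le_one hda] at h2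
      exact h2
    · refine le_trans ?_ (le_max_left _ _)
      rw [div_le_div_iff₀ hdb hb]
      rw [div_le_div_iff₀ ha hda] at h1
      linarith
    
private lemma auxT (d a b : ℝ → ℝ) (ha : ∀ ε > (0:ℝ), 0 < a ε) (hb : ∀ ε > (0:ℝ), 0 < b ε)
    (hr : Tendsto (fun ε => a ε / b ε) (𝓝[>] 0) (𝓝 1)) :
    Tendsto (fun ε => (Real.sqrt (d ε ^ 2 + 4 * a ε) - d ε) /
      (Real.sqrt (d ε ^ 2 + 4 * b ε) - d ε)) (𝓝[>] 0) (𝓝 1) := by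
  have hmin : Tendsto (fun ε => min (a ε / b ε) 1) (𝓝[>] 0) (𝓝 1) := by
    simpa using hr.min (tendsto_const_nhds : Tendsto (fun _ : ℝ => (1:ℝ)) _ _)
  have hmax : Tendsto (fun ε => max (a ε / b ε) 1) (𝓝[>] 0) (𝓝 1) := by
    simpa using hr.max (tendsto_const_nhds : Tendsto (fun _ : ℝ => (1:ℝ)) _ _)
  refine tendsto_of_tendsto_of_tendsto_of_le_of_le' hmin hmax ?_ ?_ <;>
    filter_upwards [self_mem_nhdsWithin] with ε hε
  · exact (aux2 (d ε) (a ε) (b ε) (ha ε hε) (hb ε hε)).1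
  · exact (aux2 (d ε) (a ε) (b ε) (ha ε hε) (hb ε hε)).2

theorem stmt8 (η₁ η₂ a₁₂ a₂₁ b₁₂ b₂₁ lama lamb : ℝ → ℝ)
    (h1 : ∀ ε > (0:ℝ), 0 ≤ η₁ ε) (h2 : ∀ ε > (0:ℝ), 0 ≤ η₂ ε)
    (ha12 : ∀ ε > (0:ℝ), 0 < a₁₂ ε) (ha21 : ∀ ε > (0:ℝ), 0 < a₂₁ ε)
    (hb12 : ∀ ε > (0:ℝ), 0 < b₁₂ ε) (hb21 : ∀ ε > (0:ℝ), 0 < b₂₁ ε)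
    (hr12 : Tendsto (fun ε => a₁₂ ε / b₁₂ ε) (𝓝[>] 0) (𝓝 1))
    (hr21 : Tendsto (fun ε => a₂₁ ε / b₂₁ ε) (𝓝[>] 0) (𝓝 1))
    -- Perron eigenvalues of the two 2×2 matrices (explicit formula):
    (hla : ∀ ε > (0:ℝ), lama ε =
      (η₁ ε + η₂ ε + Real.sqrt ((η₁ ε - η₂ ε) ^ 2 + 4 * a₁₂ ε * a₂₁ ε)) / 2)
    (hlb : ∀ ε > (0:ℝ), lamb ε =
      (η₁ ε + η₂ ε + Real.sqrt ((η₁ ε - η₂ ε) ^ 2 + 4 * b₁₂ ε * b₂₁ ε)) / 2) :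
    Tendsto (fun ε => (lama ε - η₁ ε) / (lamb ε - η₁ ε)) (𝓝[>] 0) (𝓝 1) ∧
      Tendsto (fun ε => (lama ε - η₂ ε) / (lamb ε - η₂ ε)) (𝓝[>] 0) (𝓝 1) := by
  have hapos : ∀ ε > (0:ℝ), 0 < a₁₂ ε * a₂₁ ε := fun ε hε => mul_pos (ha12 ε hε) (ha21 ε hε)
  have hbpos : ∀ ε > (0:ℝ), 0 < b₁₂ ε * b₂₁ ε := fun ε hε => mul_pos (hb12 ε hε) (hb21 ε hε)
  have hr : Tendsto (fun ε => (a₁₂ ε * a₂₁ ε) / (b₁₂ ε * b₂₁ ε)) (𝓝[>] 0) (𝓝 1) := by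
    have := hr12.mul hr21
    simp only [one_mul] at this
    refine this.congr fun ε => ?_
    rw [div_mul_div_comm]
  constructor
  · refine Tendsto.congr' ?_ (auxT (fun ε => η₁ ε - η₂ ε) (fun ε => a₁₂ ε * a₂₁ ε)
      (fun ε => b₁₂ ε * b₂₁ ε) hapos hbpos hr)
    filter_upwards [self_mem_nhdsWithin] with ε hε
    have e1 : Real.sqrt ((η₁ ε - η₂ ε) ^ 2 + 4 * (a₁₂ ε * a₂₁ ε)) =
        Real.sqrt ((η₁ ε - η₂ ε) ^ 2 + 4 * a₁₂ ε * a₂₁ ε) := by congr 1; ring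
    have e2 : Real.sqrt ((η₁ ε - η₂ ε) ^ 2 + 4 * (b₁₂ ε * b₂₁ ε)) =
        Real.sqrt ((η₁ ε - η₂ ε) ^ 2 + 4 * b₁₂ ε * b₂₁ ε) := by congr 1; ring
    have A : lama ε - η₁ ε =
        (Real.sqrt ((η₁ ε - η₂ ε) ^ 2 + 4 * a₁₂ ε * a₂₁ ε) - (η₁ ε - η₂ ε)) / 2 := by
      rw [hla ε hε]; ring
    have B : lamb ε - η₁ ε =
        (Real.sqrt ((η₁ ε - η₂ ε) ^ 2 + 4 * b₁₂ ε * b₂₁ ε) - (η₁ ε - η₂ ε)) / 2 := by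
      rw [hlb ε hε]; ring
    rw [e1, e2, A, B, div_div_div_comm, div_self (two_ne_zero : (2:ℝ) ≠ 0), div_one]
  · refine Tendsto.congr' ?_ (auxT (fun ε => η₂ ε - η₁ ε) (fun ε => a₁₂ ε * a₂₁ ε)
      (fun ε => b₁₂ ε * b₂₁ ε) hapos hbpos hr)
    filter_upwards [self_mem_nhdsWithin] with ε hε
    have e1 : Real.sqrt ((η₂ ε - η₁ ε) ^ 2 + 4 * (a₁₂ ε * a₂₁ ε)) =
        Real.sqrt ((η₁ ε - η₂ ε) ^ 2 + 4 * a₁₂ ε * a₂₁ ε) := by congr 1; ring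
    have e2 : Real.sqrt ((η₂ ε - η₁ ε) ^ 2 + 4 * (b₁₂ ε * b₂₁ ε)) =
        Real.sqrt ((η₁ ε - η₂ ε) ^ 2 + 4 * b₁₂ ε * b₂₁ ε) := by congr 1; ring
    have A : lama ε - η₂ ε =
        (Real.sqrt ((η₁ ε - η₂ ε) ^ 2 + 4 * a₁₂ ε * a₂₁ ε) - (η₂ ε - η₁ ε)) / 2 := by
      rw [hla ε hε]; ring
    have B : lamb ε - η₂ ε =
        (Real.sqrt ((η₁ ε - η₂ ε) ^ 2 + 4 * b₁₂ ε * b₂₁ ε) - (η₂ ε - η₁ ε)) / 2 := by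
      rw [hlb ε hε]; ring
    rw [e1, e2, A, B, div_div_div_comm, div_self (two_ne_zero : (2:ℝ) ≠ 0), div_one]
end

section
/- Let $T$ be a finite set, $\mathcal{X}$ a Banach algebra, and for each $k \in T$ let $\mathcal{L}_k$ be a bounded linear operator on $\mathcal{X}$, and let $\mathcal{L}$ be a bounded linear operator on $\mathcal{X}$. Suppose $(\eta, \nu) \in \mathbb{K} \times \mathcal{X}^*$ satisfies $\mathcal{L}^* \nu = \eta \nu$, and for each $k \in T$, $(\eta_k, h_k) \in \mathbb{K} \times \mathcal{X}$ satisfies $\mathcal{L}_k h_k = \eta_k h_k$. Suppose there exist elements $f_{k k'} \in \mathcal{X}$ for pairs $(k, k')$ with $\nu(h_{k'}) \neq 0$ such that $\nu((\mathcal{L} - \mathcal{L}_k) h_k) = \sum_{k' : \nu(h_{k'}) \neq 0} \nu(f_{kk'}(\mathcal{L} - \mathcal{L}_k) h_k)$ for each $k$. Define $\mathbf{V}(k) = \nu(h_k)$ and $\mathbf{M}(k k') = \delta_{kk'} \eta_k + \frac{\nu(f_{kk'}(\mathcal{L} - \mathcal{L}_k) h_k)}{\nu(h_{k'})}$ when $\nu(h_{k'})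 \neq 0$, and $\mathbf{M}(kk') = \delta_{kk'}\eta_k$ otherwise. Then $\eta \mathbf{V}(k) = \sum_{k' \in T} \mathbf{M}(k k') \mathbf{V}(k')$ for every $k \in T$; i.e., $\eta$ is an eigenvalue of the finite matrix $\mathbf{M}$ with right eigenvector $\mathbf{V}$, provided $\mathbf{V} \neq 0$. -/
open scoped Classical

theorem stmt9 {𝕜 : Type*} [RCLike 𝕜]
    {X : Type*} [NormedRing X] [NormedAlgebra 𝕜 X] [CompleteSpace X]
    {T : Type*} [Fintype T] [DecidableEq T]
    (L : X →L[𝕜] X) (Lk : T → X →L[𝕜] X)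
    (η : 𝕜) (ν : X →L[𝕜] 𝕜) (ηk : T → 𝕜) (h : T → X)
    -- `L* ν = η ν`
    (hdual : ∀ x : X, ν (L x) = η * ν x)
    -- `Lk h_k = η_k h_k`
    (heig : ∀ k, Lk k (h k) = ηk k • h k)
    -- (MR.1)
    (hMR1 : ∃ k, ν (h k) ≠ 0)
    (f : T → T → X)
    -- (MR.2)
    (hMR2 : ∀ k, ν (L (h k) - Lk k (h k)) =
      ∑ k' ∈ Finset.univ.filter fun k' => ν (h k') ≠ 0,
        ν (f k k' * (L (h k) - Lk k (h k)))) :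
    ∀ k, η * ν (h k) =
      ∑ k', ((if k = k' then ηk k else 0) +
        if ν (h k') ≠ 0 then
          ν (f k k' * (L (h k) - Lk k (h k))) / ν (h k')
        else 0) * ν (h k') := by
  intro k
  have key : (∑ k' ∈ Finset.univ.filter fun k' => ν (h k') ≠ 0,
        ν (f k k' * (L (h k) - Lk k (h k))))
      = η * ν (h k) - ηk k * ν (h k) := by
    rw [← hMR2 k, heig, map_sub, map_smul, smul_eq_mul, hdual]
  have h1 : ∑ k', (if k = k' then ηk k else 0) * ν (h k') = ηk k * ν (h k) := by
    simp
  have h2 : ∑ k', (if ν (h k') ≠ 0 then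
        ν (f k k' * (L (h k) - Lk k (h k))) / ν (h k') else 0) * ν (h k')
      = ∑ k' ∈ Finset.univ.filter fun k' => ν (h k') ≠ 0,
        ν (f k k' * (L (h k) - Lk k (h k))) := by
    rw [Finset.sum_filter]
    apply Finset.sum_congr rfl
    intro k' _
    split_ifs with hne
    · field_simp
    · simp
  simp only [add_mul, Finset.sum_add_distrib, h1, h2, key]
  ring
end

section
/- Let $\mathcal{X}$ be a Banach algebra, $T$ a finite set, $\mathcal{L}, \mathcal{L}_k$ bounded operators on $\mathcal{X}$ and suppose $(\eta, h)$ with $\mathcal{L} h = \eta h$ and, for each $k \in T$, $(\eta_k, \nu_k) \in \mathbb{K} \times \mathcal{X}^*$ with $\mathcal{L}_k^* \nu_k = \eta_k \nu_k$. Suppose there exist $g_{k'k} \in \mathcal{X}$ (for $k, k'$ with $\nu_{k'}(h) \neq 0$) such that $\nu_k((\mathcal{L} - \mathcal{L}_k)h) = \sum_{k' : \nu_{k'}(h) \neq 0} \nu_k((\mathcal{L} - \mathcal{L}_k)(g_{k'k} h))$. Define $\mathbf{G}(k) = \nu_k(h)$ and $\mathbf{N}(k'k) = \eta_k \delta_{kk'}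 + \frac{\nu_k((\mathcal{L} - \mathcal{L}_k)(g_{k'k} h))}{\nu_{k'}(h)}$ when $\nu_{k'}(h) \neq 0$, and $\mathbf{N}(k'k) = \eta_k \delta_{kk'}$ otherwise. Then $\eta \mathbf{G}(k) = \sum_{k' \in T} \mathbf{N}(k'k) \mathbf{G}(k')$ for all $k$, i.e. $\mathbf{G}$ is a left eigenvector of $\mathbf{N}$ with eigenvalue $\eta$. -/
open scoped Classical

theorem stmt10 {𝕜 : Type*} [RCLike 𝕜]
    {X : Type*} [NormedRing X] [NormedAlgebra 𝕜 X] [CompleteSpace X]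
    {T : Type*} [Fintype T] [DecidableEq T]
    (L : X →L[𝕜] X) (Lk : T → X →L[𝕜] X)
    (η : 𝕜) (h : X) (ηk : T → 𝕜) (νk : T → (X →L[𝕜] 𝕜))
    -- `L h = η h`
    (heig : L h = η • h)
    -- `Lk* ν_k = η_k ν_k`
    (hdualk : ∀ k, ∀ x : X, νk k (Lk k x) = ηk k * νk k x)
    -- (MR.5)
    (hMR5 : ∃ k, νk k h ≠ 0)
    (g : T → T → X)
    -- (MR.6)
    (hMR6 : ∀ k, νk k (L h - Lk k h) =
      ∑ k' ∈ Finset.univ.filter fun k' => νk k' h ≠ 0,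
        νk k (L (g k' k * h) - Lk k (g k' k * h))) :
    ∀ k, η * νk k h =
      ∑ k', ((if k = k' then ηk k else 0) +
        if νk k' h ≠ 0 then
          νk k (L (g k' k * h) - Lk k (g k' k * h)) / νk k' h
        else 0) * νk k' h := by
  intro k
  have hsplit : ∀ k' : T, ((if k = k' then ηk k else 0) +
      if νk k' h ≠ 0 then νk k (L (g k' k * h) - Lk k (g k' k * h)) / νk k' h else 0) * νk k' h
    = (if k = k' then ηk k * νk k' h else 0) +
      (if νk k' h ≠ 0 then νk k (L (g k' k * h) - Lk k (g k' k * h)) else 0) := by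
    intro k'
    by_cases hv : νk k' h = 0
    · simp [hv]
    · simp [hv, add_mul, div_mul_cancel₀, ite_mul]
  rw [Finset.sum_congr rfl fun k' _ => hsplit k', Finset.sum_add_distrib,
    Finset.sum_ite_eq Finset.univ k, ← Finset.sum_filter, ← hMR6 k]
  simp only [Finset.mem_univ, if_true, map_sub, heig, map_smul, hdualk, smul_eq_mul]
  ring
end

section
/- Let $T$ be a finite totally ordered set and $M_\epsilon$ a family of nonnegative irreducible matrices indexed by $T \times T$ satisfying: (M.1) for each $i,j$, either $M_\epsilon(ij) > 0$ for all $\epsilon > 0$ or $M_\epsilon(ij) = 0$ for all $\epsilon$; (M.2) there is $c > 0$ with $M_\epsilon(ij) \leq c$ for all $\epsilon$ and $i < j$; (M.3) $M_\epsilon(ij) \to 0$ as $\epsilon \to 0$ for $i > j$; (M.4) $M_\epsilon(ii) \to \eta_i \geq 0$ for each $i$. Let $T_0 = \{ i : \eta_i = \max_j \eta_j \}$ and $T_1 = T \setminus T_0$, and let $(b_\epsilon(i))$ be the right Perron eigenvector with $\sum_i b_\epsilon(i) = 1$. Then for each $i \in T_1$, $b_\epsilon(i) \asymp \sum_{j \in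 T_0} \sum_{w \in SP(i, j : T_1)} M_\epsilon(w) b_\epsilon(j)$ as $\epsilon \to 0$, where for a path $w = w_1 \cdots w_p$, $M_\epsilon(w) = \prod_{k=1}^{p-1} M_\epsilon(w_k w_{k+1})$ and $SP(i, j : T_1)$ is the set of simple paths from $i$ to $j$ whose interior vertices lie in $T_1$. -/
/-!
Fix `ε` small and write `A = M ε`, `λ = eig ε`, `γ` a third of the gap between `max η` and the
other `η a`. Then `λ - A a a ≥ γ` on `T₁`, the entries of `A` below the diagonal are at most some
tiny `δ` and the others are bounded. A simple cycle cannot only climb in the order of `Fin m`, so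
it uses a descending edge: cycles have weight `O(δ)`.

Lower bound: iterating `A a c * b c ≤ λ * b a` along a path `w` from `i` to `k` gives
`M(w) b k ≤ λ ^ |w| b i`, with `λ ≤ m * max A`.

Upper bound, by induction on `S ⊆ T₁` with `i ∈ S`: `(λ - A i i) b i` is the sum of `A i k b k`
over `k ∉ S` and of `A i j b j` over `j ∈ S \ {i}`. Expanding each such `b j` by the induction
hypothesis for `S \ {i}` produces the cycles through `i` (whose weight is absorbed by the gap `γ`)
and simple paths from `i` leaving `S`.
-/

open Filter Set
open scoped Topology Classical

/-- The weight `M(w) = ∏ M(w_k w_{k+1})` of a path `w` of length `p + 2`. -/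
noncomputable def pathWeight {m : ℕ} (M : Matrix (Fin m) (Fin m) ℝ) {p : ℕ}
    (w : Fin (p + 2) → Fin m) : ℝ :=
  ∏ k : Fin (p + 1), M (w k.castSucc) (w k.succ)

/-- `∑_{w ∈ SP(i, j : T₁)} M(w)`: the sum of the weights of all simple paths
from `i` to `j` whose vertices lie in `T₁ ∪ {i, j}`. -/
noncomputable def simplePathSum {m : ℕ} (M : Matrix (Fin m) (Fin m) ℝ)
    (i j : Fin m) (T1 : Finset (Fin m)) : ℝ :=
  ∑ p ∈ Finset.range m, ∑ w ∈ Finset.univ.filter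
      (fun w : Fin (p + 2) → Fin m => Function.Injective w ∧ w 0 = i ∧
        w (Fin.last (p + 1)) = j ∧ ∀ k, w k = i ∨ w k = j ∨ w k ∈ T1),
    pathWeight M w

/-- Asymptotic comparability of two families of reals as `ε → 0`. -/
def AsympF (f g : ℝ → ℝ) : Prop :=
  ∃ c ≥ (1:ℝ), ∃ ε₀ > (0:ℝ), ∀ ε : ℝ, 0 < ε → ε ≤ ε₀ →
    c⁻¹ * g ε ≤ f ε ∧ f ε ≤ c * g ε

section SimplePaths

variable {m : ℕ}

noncomputable def simplePaths (i k : Fin m) (S : Finset (Fin m)) (p : ℕ) :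
    Finset (Fin (p + 2) → Fin m) :=
  Finset.univ.filter (fun w => Function.Injective w ∧ w 0 = i ∧
    w (Fin.last (p + 1)) = k ∧ ∀ t, w t = i ∨ w t = k ∨ w t ∈ S)

theorem simplePathSum_eq (A : Matrix (Fin m) (Fin m) ℝ) (i k : Fin m) (S : Finset (Fin m)) :
    simplePathSum A i k S = ∑ p ∈ Finset.range m, ∑ w ∈ simplePaths i k S p, pathWeight A w :=
  rfl

theorem card_simplePaths_le (i k : Fin m) (S : Finset (Fin m)) (p : ℕ) :
    (simplePaths i k S p).card ≤ m ^ (p + 2) :=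
  (Finset.card_le_univ _).trans_eq (by simp)

theorem simplePaths_eq_empty (i k : Fin m) (S : Finset (Fin m)) :
    simplePaths i k S m = ∅ :=
  Finset.filter_eq_empty_iff.2 fun w _ hw => by
    simpa using Fintype.card_le_of_injective w hw.1

theorem sum_simplePaths_le {i k : Fin m} {S : Finset (Fin m)}
    {f : ∀ p, (Fin (p + 2) → Fin m) → ℝ} {C : ℝ} (hC : 0 ≤ C)
    (hf : ∀ p < m, ∀ w ∈ simplePaths i k S p, f p w ≤ C) :
    ∑ p ∈ Finset.range m, ∑ w ∈ simplePaths i k S p, f p w ≤ m ^ (m + 2) * C := by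
  have hinner : ∀ p ∈ Finset.range m, ∑ w ∈ simplePaths i k S p, f p w ≤ m ^ (m + 1) * C := by
    intro p hp
    have hp := Finset.mem_range.1 hp
    calc ∑ w ∈ simplePaths i k S p, f p w ≤ (simplePaths i k S p).card * C := by
          simpa using Finset.sum_le_card_nsmul _ _ _ (hf p hp)
      _ ≤ m ^ (m + 1) * C := by
          gcongr
          exact_mod_cast (card_simplePaths_le i k S p).trans
            (Nat.pow_le_pow_right (by omega) (by omega))
  calc _ ≤ (Finset.range m).card * (m ^ (m + 1) * C) := by
        simpa using Finset.sum_le_card_nsmul _ _ _ hinner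
    _ = m ^ (m + 2) * C := by rw [Finset.card_range]; ring

theorem pathWeight_nonneg {A : Matrix (Fin m) (Fin m) ℝ} (hA : ∀ a c, 0 ≤ A a c) {p : ℕ}
    (w : Fin (p + 2) → Fin m) : 0 ≤ pathWeight A w :=
  Finset.prod_nonneg fun _ _ => hA _ _

theorem simplePathSum_nonneg {A : Matrix (Fin m) (Fin m) ℝ} (hA : ∀ a c, 0 ≤ A a c)
    (i k : Fin m) (S : Finset (Fin m)) : 0 ≤ simplePathSum A i k S :=
  Finset.sum_nonneg fun _ _ => Finset.sum_nonneg fun w _ => pathWeight_nonneg hA w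

theorem pathWeight_cons (A : Matrix (Fin m) (Fin m) ℝ) {p : ℕ} (a : Fin m)
    (w : Fin (p + 2) → Fin m) :
    pathWeight A (Fin.cons a w) = A a (w 0) * pathWeight A w := by
  simp [pathWeight, Fin.prod_univ_succ]

theorem le_simplePathSum {A : Matrix (Fin m) (Fin m) ℝ} (hA : ∀ a c, 0 ≤ A a c)
    {i k : Fin m} (hik : i ≠ k) (S : Finset (Fin m)) :
    A i k ≤ simplePathSum A i k S := by
  have hmem : ![i, k] ∈ simplePaths i k S 0 := by
    simp [simplePaths, Fin.forall_fin_two, Function.Injective, hik, hik.symm]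
  calc A i k = pathWeight A ![i, k] := by simp [pathWeight]
    _ ≤ ∑ w ∈ simplePaths i k S 0, pathWeight A w :=
        Finset.single_le_sum (fun w _ => pathWeight_nonneg hA w) hmem
    _ ≤ simplePathSum A i k S :=
        Finset.single_le_sum (f := fun p => ∑ w ∈ simplePaths i k S p, pathWeight A w)
          (fun p _ => Finset.sum_nonneg fun w _ => pathWeight_nonneg hA w)
          (Finset.mem_range.2 i.pos)

end SimplePaths

section PathWeights

variable {m : ℕ} {A : Matrix (Fin m) (Fin m) ℝ}

theorem Fin.exists_succ_lt_castSucc_of_apply_last_eq {α : Type*} [LinearOrder α] {p : ℕ}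
    {v : Fin (p + 2) → α} (hne : ∀ k : Fin (p + 1), v k.castSucc ≠ v k.succ)
    (hclosed : v (Fin.last (p + 1)) = v 0) : ∃ k : Fin (p + 1), v k.succ < v k.castSucc := by
  by_contra! hasc
  have hmono : StrictMono v :=
    Fin.strictMono_iff_lt_succ.2 fun k => (hasc k).lt_of_ne (hne k)
  exact (hmono (Fin.last_pos : (0 : Fin (p + 2)) < Fin.last (p + 1))).ne hclosed.symm

theorem pathWeight_le_of_descent {B δ : ℝ} (hA : ∀ a c, 0 ≤ A a c) (hAB : ∀ a c, A a c ≤ B)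
    (hdown : ∀ a c, c < a → A a c ≤ δ) {p : ℕ} {w : Fin (p + 2) → Fin m}
    (hw : ∃ k : Fin (p + 1), w k.succ < w k.castSucc) : pathWeight A w ≤ δ * B ^ p := by
  obtain ⟨k, hk⟩ := hw
  rw [pathWeight, ← Finset.mul_prod_erase _ _ (Finset.mem_univ k)]
  have hrest : ∏ l ∈ Finset.univ.erase k, A (w l.castSucc) (w l.succ) ≤ B ^ p := by
    calc _ ≤ ∏ _l ∈ Finset.univ.erase k, B :=
          Finset.prod_le_prod (fun _ _ => hA _ _) (fun _ _ => hAB _ _)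
      _ = B ^ p := by simp [Finset.card_erase_of_mem]
  exact mul_le_mul (hdown _ _ hk) hrest (Finset.prod_nonneg fun _ _ => hA _ _)
    ((hA _ _).trans (hdown _ _ hk))

theorem pathWeight_mul_le_pow {b : Fin m → ℝ} {e : ℝ} (hA : ∀ a c, 0 ≤ A a c) (he : 0 ≤ e)
    (hsub : ∀ a c, A a c * b c ≤ e * b a) :
    ∀ {p : ℕ} (w : Fin (p + 2) → Fin m),
      pathWeight A w * b (w (Fin.last (p + 1))) ≤ e ^ (p + 1) * b (w 0)
  | 0, w => by simpa [pathWeight] using hsub (w 0) (w 1)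
  | p + 1, w => by
    obtain ⟨a, v, rfl⟩ : ∃ a v, w = Fin.cons a v := ⟨w 0, Fin.tail w, (Fin.cons_self_tail w).symm⟩
    rw [pathWeight_cons, ← Fin.succ_last, Fin.cons_succ, Fin.cons_zero, mul_assoc]
    calc A a (v 0) * (pathWeight A v * b (v (Fin.last (p + 1))))
        ≤ A a (v 0) * (e ^ (p + 1) * b (v 0)) :=
          mul_le_mul_of_nonneg_left (pathWeight_mul_le_pow hA he hsub v) (hA _ _)
      _ = e ^ (p + 1) * (A a (v 0) * b (v 0)) := by ring
      _ ≤ e ^ (p + 1) * (e * b a) := mul_le_mul_of_nonneg_left (hsub _ _) (pow_nonneg he _)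
      _ = e ^ (p + 1 + 1) * b a := by ring

end PathWeights

section Cycles

variable {m : ℕ} {A : Matrix (Fin m) (Fin m) ℝ}

noncomputable def cycleSum (A : Matrix (Fin m) (Fin m) ℝ) (i : Fin m) (S : Finset (Fin m)) : ℝ :=
  ∑ j ∈ S.erase i, A i j * simplePathSum A j i (S.erase i)

theorem cycleSum_nonneg (hA : ∀ a c, 0 ≤ A a c) (i : Fin m) (S : Finset (Fin m)) :
    0 ≤ cycleSum A i S :=
  Finset.sum_nonneg fun _ _ => mul_nonneg (hA _ _) (simplePathSum_nonneg hA _ _ _)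

theorem exists_descent_cons_of_mem_simplePaths {i j : Fin m} {S : Finset (Fin m)} {p : ℕ}
    (hji : j ≠ i) {w : Fin (p + 2) → Fin m} (hw : w ∈ simplePaths j i S p) :
    ∃ k : Fin (p + 2), (Fin.cons i w : Fin (p + 3) → Fin m) k.succ <
      (Fin.cons i w : Fin (p + 3) → Fin m) k.castSucc := by
  obtain ⟨-, hinj, hw0, hwlast, -⟩ := Finset.mem_filter.1 hw
  refine Fin.exists_succ_lt_castSucc_of_apply_last_eq (fun k => ?_) ?_
  · induction k using Fin.cases with
    | zero => simpa [hw0] using hji.symm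
    | succ s =>
      rw [← Fin.succ_castSucc, Fin.cons_succ, Fin.cons_succ]
      exact hinj.ne (Fin.castSucc_lt_succ (i := s)).ne
  · rw [← Fin.succ_last, Fin.cons_succ, hwlast, Fin.cons_zero]

theorem cycleSum_le {B δ : ℝ} (hA : ∀ a c, 0 ≤ A a c) (hB : 1 ≤ B) (hAB : ∀ a c, A a c ≤ B)
    (hdown : ∀ a c, c < a → A a c ≤ δ) (hδ : 0 ≤ δ) (i : Fin m) (S : Finset (Fin m)) :
    cycleSum A i S ≤ m ^ (m + 3) * B ^ m * δ := by
  have hterm : ∀ j ∈ S.erase i, A i j * simplePathSum A j i (S.erase i) ≤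
      m ^ (m + 2) * (δ * B ^ m) := by
    intro j hj
    simp only [simplePathSum_eq, Finset.mul_sum]
    refine sum_simplePaths_le (by positivity) fun p hp w hw => ?_
    obtain ⟨w0, -⟩ := (Finset.mem_filter.1 hw).2.2
    calc A i j * pathWeight A w = pathWeight A (Fin.cons i w : Fin (p + 3) → Fin m) := by
          rw [pathWeight_cons, ← w0]
      _ ≤ δ * B ^ (p + 1) := pathWeight_le_of_descent hA hAB hdown
          (exists_descent_cons_of_mem_simplePaths (Finset.ne_of_mem_erase hj) hw)
      _ ≤ δ * B ^ m := by gcongr; exact hp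
  calc cycleSum A i S ≤ (S.erase i).card * (m ^ (m + 2) * (δ * B ^ m)) := by
        simpa [cycleSum] using Finset.sum_le_card_nsmul _ _ _ hterm
    _ ≤ m * (m ^ (m + 2) * (δ * B ^ m)) := by
        gcongr
        exact_mod_cast (Finset.card_le_univ _).trans_eq (Fintype.card_fin m)
    _ = m ^ (m + 3) * B ^ m * δ := by ring

end Cycles

section Extension

variable {m : ℕ} {A : Matrix (Fin m) (Fin m) ℝ} {S : Finset (Fin m)} {i k : Fin m}

theorem cons_mem_simplePaths (hki : k ≠ i) {j : Fin m} (hj : j ∈ S.erase i)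
    {p : ℕ} {w : Fin (p + 2) → Fin m} (hw : w ∈ simplePaths j k (S.erase i) p) :
    (Fin.cons i w : Fin (p + 3) → Fin m) ∈ simplePaths i k S (p + 1) := by
  obtain ⟨-, hinj, hw0, hwlast, hwS⟩ := Finset.mem_filter.1 hw
  have hwS' : ∀ t, w t = k ∨ w t ∈ S.erase i := fun t => by
    rcases hwS t with h | h | h
    · exact .inr (h ▸ hj)
    · exact .inl h
    · exact .inr h
  have hi : i ∉ Set.range w := by
    rintro ⟨t, rfl⟩
    rcases hwS' t with h | h
    · exact hki h.symm
    · exact Finset.notMem_erase _ _ h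
  refine Finset.mem_filter.2 ⟨Finset.mem_univ _, Fin.cons_injective_iff.2 ⟨hi, hinj⟩,
    Fin.cons_zero _ _, by rw [← Fin.succ_last, Fin.cons_succ, hwlast], fun t => ?_⟩
  induction t using Fin.cases with
  | zero => exact .inl rfl
  | succ s =>
    rw [Fin.cons_succ]
    rcases hwS' s with h | h
    · exact .inr (.inl h)
    · exact .inr (.inr (Finset.mem_of_mem_erase h))

theorem sum_mul_sum_simplePaths_erase_le (hA : ∀ a c, 0 ≤ A a c) (hki : k ≠ i)
    (p : ℕ) :
    ∑ j ∈ S.erase i, ∑ w ∈ simplePaths j k (S.erase i) p, A i j * pathWeight A w ≤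
      ∑ v ∈ simplePaths i k S (p + 1), pathWeight A v := by
  let cons : (Σ _ : Fin m, Fin (p + 2) → Fin m) → Fin (p + 3) → Fin m := fun x => Fin.cons i x.2
  have hinj : Set.InjOn cons ((S.erase i).sigma fun j => simplePaths j k (S.erase i) p) := by
    intro x hx y hy hxy
    have h2 : x.2 = y.2 := Fin.cons_right_injective (α := fun _ => Fin m) i hxy
    have h1 : x.1 = y.1 := by
      rw [← (Finset.mem_filter.1 (Finset.mem_sigma.1 hx).2).2.2.1,
        ← (Finset.mem_filter.1 (Finset.mem_sigma.1 hy).2).2.2.1, h2]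
    exact Sigma.ext h1 (heq_of_eq h2)
  rw [Finset.sum_sigma']
  calc _ = ∑ x ∈ (S.erase i).sigma (fun j => simplePaths j k (S.erase i) p),
        pathWeight A (cons x) := Finset.sum_congr rfl fun x hx => by
          rw [pathWeight_cons, (Finset.mem_filter.1 (Finset.mem_sigma.1 hx).2).2.2.1]
    _ = ∑ v ∈ ((S.erase i).sigma fun j => simplePaths j k (S.erase i) p).image cons,
        pathWeight A v := (Finset.sum_image hinj).symm
    _ ≤ _ := by
        refine Finset.sum_le_sum_of_subset_of_nonneg ?_ fun v _ _ => pathWeight_nonneg hA v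
        simp only [Finset.image_subset_iff, Finset.mem_sigma]
        exact fun x hx => cons_mem_simplePaths hki hx.1 hx.2

theorem sum_mul_simplePathSum_erase_le (hA : ∀ a c, 0 ≤ A a c) (hki : k ≠ i) :
    ∑ j ∈ S.erase i, A i j * simplePathSum A j k (S.erase i) ≤ simplePathSum A i k S := by
  set g : ℕ → ℝ := fun p => ∑ v ∈ simplePaths i k S p, pathWeight A v
  have hg0 : 0 ≤ g 0 := Finset.sum_nonneg fun v _ => pathWeight_nonneg hA v
  have hgm : g m = 0 := by simp [g, simplePaths_eq_empty]
  calc _ = ∑ p ∈ Finset.range m, ∑ j ∈ S.erase i,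
        ∑ w ∈ simplePaths j k (S.erase i) p, A i j * pathWeight A w := by
        simp only [simplePathSum_eq, Finset.mul_sum]
        exact Finset.sum_comm
    _ ≤ ∑ p ∈ Finset.range m, g (p + 1) :=
        Finset.sum_le_sum fun p _ => sum_mul_sum_simplePaths_erase_le hA hki p
    _ ≤ ∑ p ∈ Finset.range m, g p := by
        have h := (Finset.sum_range_succ' g m).symm.trans (Finset.sum_range_succ g m)
        linarith
    _ = simplePathSum A i k S := rfl

end Extension

section Eigenvector

variable {m : ℕ} {A : Matrix (Fin m) (Fin m) ℝ} {b : Fin m → ℝ} {e : ℝ}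

theorem mul_le_of_mulVec_eq_smul (hA : ∀ a c, 0 ≤ A a c) (hb : ∀ a, 0 ≤ b a)
    (heig : A.mulVec b = e • b) (a c : Fin m) : A a c * b c ≤ e * b a :=
  calc A a c * b c ≤ ∑ l, A a l * b l :=
        Finset.single_le_sum (f := fun l => A a l * b l)
          (fun l _ => mul_nonneg (hA _ _) (hb l)) (Finset.mem_univ c)
    _ = e * b a := congrFun heig a

theorem diag_le_of_mulVec_eq_smul (hA : ∀ a c, 0 ≤ A a c) (hb : ∀ a, 0 < b a)
    (heig : A.mulVec b = e • b) (a : Fin m) : A a a ≤ e :=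
  le_of_mul_le_mul_right (mul_le_of_mulVec_eq_smul hA (fun c => (hb c).le) heig a a) (hb a)

theorem le_card_mul_of_mulVec_eq_smul [Nonempty (Fin m)] {B : ℝ} (hA : ∀ a c, 0 ≤ A a c)
    (hAB : ∀ a c, A a c ≤ B) (hb : ∀ a, 0 < b a) (heig : A.mulVec b = e • b) : e ≤ m * B := by
  obtain ⟨a, ha⟩ := Finite.exists_max b
  refine le_of_mul_le_mul_right ?_ (hb a)
  calc e * b a = ∑ c, A a c * b c := (congrFun heig a).symm
    _ ≤ ∑ _c : Fin m, B * b a :=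
        Finset.sum_le_sum fun c _ => mul_le_mul (hAB a c) (ha c) (hb c).le
          ((hA a c).trans (hAB a c))
    _ = m * B * b a := by
        rw [Finset.sum_const, Finset.card_univ, Fintype.card_fin, nsmul_eq_mul]; ring

theorem simplePathSum_mul_le {E : ℝ} (hA : ∀ a c, 0 ≤ A a c) (hb : ∀ a, 0 < b a)
    (heig : A.mulVec b = e • b) (hE : 1 ≤ E) (heE : e ≤ E) (i k : Fin m) (S : Finset (Fin m)) :
    simplePathSum A i k S * b k ≤ m ^ (m + 2) * (E ^ m * b i) := by
  have he : 0 ≤ e := (hA i i).trans (diag_le_of_mulVec_eq_smul hA hb heig i)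
  simp only [simplePathSum_eq, Finset.sum_mul]
  refine sum_simplePaths_le (by have := hb i; positivity) fun p hp w hw => ?_
  obtain ⟨-, -, hw0, hwlast, -⟩ := Finset.mem_filter.1 hw
  calc pathWeight A w * b k ≤ e ^ (p + 1) * b i := by
        simpa [hw0, hwlast] using pathWeight_mul_le_pow hA he
          (mul_le_of_mulVec_eq_smul hA (fun a => (hb a).le) heig) w
    _ ≤ E ^ m * b i := by
        gcongr
        exacts [(hb i).le, (pow_le_pow_left₀ he heE _).trans (pow_le_pow_right₀ hE hp)]

end Eigenvector

section UpperBound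

variable {m : ℕ} {A : Matrix (Fin m) (Fin m) ℝ} {b : Fin m → ℝ} {e : ℝ}
  {S : Finset (Fin m)} {i : Fin m}

theorem sub_diag_mul_eq_of_mulVec_eq_smul (heig : A.mulVec b = e • b) (hi : i ∈ S) :
    (e - A i i) * b i = ∑ k ∈ Sᶜ, A i k * b k + ∑ j ∈ S.erase i, A i j * b j := by
  have h := (congrFun heig i).symm
  rw [Pi.smul_apply, smul_eq_mul, Matrix.mulVec, dotProduct,
    ← Finset.sum_compl_add_sum S, ← Finset.add_sum_erase S _ hi] at h
  linarith

theorem sum_erase_mul_le {C : ℝ} (hA : ∀ a c, 0 ≤ A a c) (hb : ∀ a, 0 < b a) (hC : 0 ≤ C)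
    (hi : i ∈ S) (hIH : ∀ j ∈ S.erase i,
      b j ≤ C * ∑ k ∈ (S.erase i)ᶜ, simplePathSum A j k (S.erase i) * b k) :
    ∑ j ∈ S.erase i, A i j * b j ≤
      C * (cycleSum A i S * b i) + C * ∑ k ∈ Sᶜ, simplePathSum A i k S * b k := by
  have hiS : i ∉ Sᶜ := Finset.notMem_compl.2 hi
  calc ∑ j ∈ S.erase i, A i j * b j
      ≤ ∑ j ∈ S.erase i, A i j * (C * (simplePathSum A j i (S.erase i) * b i +
          ∑ k ∈ Sᶜ, simplePathSum A j k (S.erase i) * b k)) := by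
        refine Finset.sum_le_sum fun j hj => mul_le_mul_of_nonneg_left ?_ (hA i j)
        simpa [Finset.compl_erase, Finset.sum_insert hiS] using hIH j hj
    _ = C * (cycleSum A i S * b i) + C * ∑ k ∈ Sᶜ,
          (∑ j ∈ S.erase i, A i j * simplePathSum A j k (S.erase i)) * b k := by
        simp only [cycleSum, mul_add, Finset.mul_sum, Finset.sum_mul, Finset.sum_add_distrib]
        rw [Finset.sum_comm (s := S.erase i) (t := Sᶜ)]
        congr 1 <;> refine Finset.sum_congr rfl fun _ _ => ?_
        · ring
        · exact Finset.sum_congr rfl fun _ _ => by ring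
    _ ≤ C * (cycleSum A i S * b i) + C * ∑ k ∈ Sᶜ, simplePathSum A i k S * b k := by
        gcongr with k hk
        · exact (hb k).le
        · exact sum_mul_simplePathSum_erase_le hA fun h => Finset.mem_compl.1 hk (h ▸ hi)

theorem le_pow_sub_one_mul_sum_simplePathSum (hA : ∀ a c, 0 ≤ A a c) (hb : ∀ a, 0 < b a)
    (heig : A.mulVec b = e • b) {γ : ℝ} (hγ : 0 < γ) {T : Finset (Fin m)}
    (hgap : ∀ a ∈ T, γ ≤ e - A a a)
    (hcycle : ∀ S ⊆ T, ∀ a ∈ S, (2 / γ + 1) ^ m * cycleSum A a S ≤ γ / 2) :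
    ∀ S ⊆ T, ∀ i ∈ S,
      b i ≤ ((2 / γ + 1) ^ S.card - 1) * ∑ k ∈ Sᶜ, simplePathSum A i k S * b k := by
  intro S
  induction S using Finset.strongInduction with
  | H S ih =>
  intro hST i hi
  set x := 2 / γ
  set n := (S.erase i).card
  set σ := ∑ k ∈ Sᶜ, simplePathSum A i k S * b k
  have hx : 0 < x := by positivity
  have hpow : 1 ≤ (x + 1) ^ n := one_le_pow₀ (by linarith)
  have hσ : 0 ≤ σ :=
    Finset.sum_nonneg fun k _ => mul_nonneg (simplePathSum_nonneg hA _ _ _) (hb k).le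
  have hout : ∑ k ∈ Sᶜ, A i k * b k ≤ σ :=
    Finset.sum_le_sum fun k hk => mul_le_mul_of_nonneg_right
      (le_simplePathSum hA (fun h : i = k => Finset.mem_compl.1 hk (h ▸ hi)) S) (hb k).le
  have hin := sum_erase_mul_le hA hb (C := (x + 1) ^ n - 1) (by linarith) hi fun j hj =>
    ih _ (Finset.erase_ssubset hi) ((Finset.erase_subset i S).trans hST) j hj
  have hcyc : ((x + 1) ^ n - 1) * cycleSum A i S ≤ γ / 2 := by
    refine le_trans ?_ (hcycle S hST i hi)
    gcongr
    · exact cycleSum_nonneg hA i S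
    · have : n ≤ m := (Finset.card_le_univ _).trans_eq (Fintype.card_fin m)
      linarith [pow_le_pow_right₀ (by linarith : (1 : ℝ) ≤ x + 1) this]
  have hhalf : γ / 2 * b i ≤ (x + 1) ^ n * σ := by
    have h1 := mul_le_mul_of_nonneg_right (hgap i (hST hi)) (hb i).le
    have h2 := mul_le_mul_of_nonneg_right hcyc (hb i).le
    rw [sub_diag_mul_eq_of_mulVec_eq_smul heig hi] at h1
    nlinarith
  rw [← Finset.card_erase_add_one hi]
  calc b i = x * (γ / 2 * b i) := by simp only [x]; field_simp
    _ ≤ x * ((x + 1) ^ n * σ) := by gcongr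
    _ ≤ ((x + 1) ^ (n + 1) - 1) * σ := by
        rw [pow_succ]; nlinarith [mul_nonneg (sub_nonneg.2 hpow) hσ]

end UpperBound

theorem comparable_of_small_descents {m : ℕ} {A : Matrix (Fin m) (Fin m) ℝ} {b : Fin m → ℝ}
    {e γ B δ : ℝ} {T : Finset (Fin m)} {i : Fin m} (hA : ∀ a c, 0 ≤ A a c) (hb : ∀ a, 0 < b a)
    (heig : A.mulVec b = e • b) (hγ : 0 < γ) (hB : 1 ≤ B) (hAB : ∀ a c, A a c ≤ B)
    (hdown : ∀ a c, c < a → A a c ≤ δ) (hδ : 0 ≤ δ)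
    (hsmall : (2 / γ + 1) ^ m * (m ^ (m + 3) * B ^ m) * δ ≤ γ / 2)
    (hgap : ∀ a ∈ T, γ ≤ e - A a a) (hi : i ∈ T) :
    b i ≤ (2 / γ + 1) ^ m * ∑ k ∈ Tᶜ, simplePathSum A i k T * b k ∧
      ∑ k ∈ Tᶜ, simplePathSum A i k T * b k ≤ m ^ (m + 3) * (m * B) ^ m * b i := by
  have : Nonempty (Fin m) := ⟨i⟩
  have hm : (1 : ℝ) ≤ m := by exact_mod_cast i.pos
  have hcard : ∀ S : Finset (Fin m), S.card ≤ m := fun S =>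
    (Finset.card_le_univ S).trans_eq (Fintype.card_fin m)
  constructor
  · have hcycle : ∀ S ⊆ T, ∀ a ∈ S, (2 / γ + 1) ^ m * cycleSum A a S ≤ γ / 2 := fun S _ a _ =>
      calc _ ≤ (2 / γ + 1) ^ m * (m ^ (m + 3) * B ^ m * δ) := by
            gcongr; exact cycleSum_le hA hB hAB hdown hδ a S
        _ ≤ γ / 2 := by rw [← mul_assoc]; exact hsmall
    refine (le_pow_sub_one_mul_sum_simplePathSum hA hb heig hγ hgap hcycle T subset_rfl i
      hi).trans ?_
    gcongr
    · exact Finset.sum_nonneg fun k _ =>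
        mul_nonneg (simplePathSum_nonneg hA _ _ _) (hb k).le
    · have h1 : (1 : ℝ) ≤ 2 / γ + 1 := le_add_of_nonneg_left (by positivity)
      linarith [pow_le_pow_right₀ h1 (hcard T)]
  · have hE : 1 ≤ (m : ℝ) * B := one_le_mul_of_one_le_of_one_le hm hB
    have hterm := fun k (_ : k ∈ Tᶜ) => simplePathSum_mul_le hA hb heig hE
      (le_card_mul_of_mulVec_eq_smul hA hAB hb heig) i k T
    calc _ ≤ (Tᶜ).card * (m ^ (m + 2) * ((m * B) ^ m * b i)) := by
          simpa using Finset.sum_le_card_nsmul _ _ _ hterm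
      _ ≤ m * (m ^ (m + 2) * ((m * B) ^ m * b i)) := by
          have := (hb i).le
          gcongr
          exact_mod_cast hcard _
      _ = m ^ (m + 3) * (m * B) ^ m * b i := by ring

theorem exists_pos_le_one_mul_le {X ε : ℝ} (hX : 0 ≤ X) (hε : 0 < ε) :
    ∃ δ > 0, δ ≤ 1 ∧ X * δ ≤ ε := by
  refine ⟨min 1 (ε / (X + 1)), lt_min one_pos (by positivity), min_le_left _ _, ?_⟩
  calc X * min 1 (ε / (X + 1)) ≤ (X + 1) * (ε / (X + 1)) :=
        mul_le_mul (by linarith) (min_le_right _ _) (by positivity) (by linarith)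
    _ = ε := mul_div_cancel₀ _ (by positivity)

theorem exists_gap_of_mem_compl {ι : Type*} [Fintype ι] [DecidableEq ι] {η : ι → ℝ} {T0 : Finset ι}
    (hT0 : ∀ i, i ∈ T0 ↔ ∀ j, η j ≤ η i) {top : ι} (htop : ∀ j, η j ≤ η top) :
    ∃ γ > 0, ∀ a ∈ T0ᶜ, η a + 3 * γ ≤ η top := by
  rcases (T0ᶜ).eq_empty_or_nonempty with h | h
  · exact ⟨1, one_pos, by simp [h]⟩
  obtain ⟨a₀, ha₀, hmax⟩ := (T0ᶜ).exists_max_image η h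
  obtain ⟨j, hj⟩ := not_forall.1 ((hT0 a₀).not.1 (Finset.mem_compl.1 ha₀))
  have hlt : η a₀ < η top := (not_le.1 hj).trans_le (htop j)
  exact ⟨(η top - η a₀) / 3, by linarith, fun a ha => by linarith [hmax a ha]⟩

theorem eventually_forall_lt_imp_le {α : Type*} {l : Filter α} {m : ℕ}
    {M : α → Matrix (Fin m) (Fin m) ℝ}
    (hM : ∀ i j : Fin m, j < i → Tendsto (fun x => M x i j) l (𝓝 0))
    {δ : ℝ} (hδ : 0 < δ) : ∀ᶠ x in l, ∀ a c, c < a → M x a c ≤ δ :=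
  eventually_all.2 fun a => eventually_all.2 fun c => by
    by_cases hca : c < a
    · filter_upwards [(hM a c hca).eventually (gt_mem_nhds hδ)] with x hx _ using hx.le
    · exact Eventually.of_forall fun _ h => absurd h hca

theorem asympF_of_eventually {f g : ℝ → ℝ} {C₁ C₂ : ℝ}
    (h : ∀ᶠ ε in 𝓝[>] 0, 0 ≤ f ε ∧ 0 ≤ g ε ∧ f ε ≤ C₁ * g ε ∧ g ε ≤ C₂ * f ε) :
    AsympF f g := by
  obtain ⟨ε₀, hε₀, hsub⟩ := mem_nhdsGT_iff_exists_Ioc_subset.1 h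
  set c := max (max C₁ C₂) 1
  have hc : 0 < c := lt_of_lt_of_le one_pos (le_max_right _ _)
  refine ⟨c, le_max_right _ _, ε₀, hε₀, fun ε hε hεle => ?_⟩
  obtain ⟨hf, hg, hfg, hgf⟩ := hsub ⟨hε, hεle⟩
  constructor
  · rw [inv_mul_le_iff₀ hc]
    exact hgf.trans (by gcongr; exact (le_max_right _ _).trans (le_max_left _ _))
  · exact hfg.trans (by gcongr; exact (le_max_left _ _).trans (le_max_left _ _))

theorem stmt11_general (m : ℕ) (M : ℝ → Matrix (Fin m) (Fin m) ℝ)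
    (hnn : ∀ ε > (0:ℝ), ∀ i j, 0 ≤ M ε i j)
    -- (M.2)
    (hM2 : ∃ c > (0:ℝ), ∀ ε > (0:ℝ), ∀ i j, i < j → M ε i j ≤ c)
    -- (M.3)
    (hM3 : ∀ i j : Fin m, j < i → Tendsto (fun ε => M ε i j) (𝓝[>] 0) (𝓝 0))
    -- (M.4)
    (η : Fin m → ℝ)
    (hM4 : ∀ i, Tendsto (fun ε => M ε i i) (𝓝[>] 0) (𝓝 (η i)))
    (T0 T1 : Finset (Fin m))
    (hT0 : ∀ i, i ∈ T0 ↔ ∀ j, η j ≤ η i) (hT1 : T1 = T0ᶜ)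
    -- right Perron eigenvector, normalized
    (eig : ℝ → ℝ) (b : ℝ → Fin m → ℝ)
    (hbpos : ∀ ε > (0:ℝ), ∀ i, 0 < b ε i)
    (hbeig : ∀ ε > (0:ℝ), (M ε).mulVec (b ε) = eig ε • b ε) :
    ∀ i ∈ T1, AsympF (fun ε => b ε i)
      (fun ε => ∑ j ∈ T0, simplePathSum (M ε) i j T1 * b ε j) := by
  intro i hi
  have : Nonempty (Fin m) := ⟨i⟩
  obtain ⟨top, htop⟩ := Finite.exists_max η
  obtain ⟨γ, hγ, hgapη⟩ := exists_gap_of_mem_compl hT0 htop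
  obtain ⟨c, hc0, hc⟩ := hM2
  set B := max c (η top + γ) + 1
  have hcB := le_max_left c (η top + γ)
  have hηB := le_max_right c (η top + γ)
  -- `δ` bounds the entries below the diagonal; by `cycleSum_le` the cycles then weigh at most
  -- `m ^ (m + 3) * B ^ m * δ`, small enough to be absorbed by the gap `γ`.
  obtain ⟨δ, hδ, hδ1, hsmall⟩ := exists_pos_le_one_mul_le
    (X := (2 / γ + 1) ^ m * (m ^ (m + 3) * B ^ m)) (by positivity) (half_pos hγ)
  refine asympF_of_eventually (C₁ := (2 / γ + 1) ^ m) (C₂ := m ^ (m + 3) * (m * B) ^ m) ?_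
  filter_upwards [self_mem_nhdsWithin, eventually_forall_lt_imp_le hM3 hδ,
    eventually_all.2 fun a => (hM4 a).eventually (Ioo_mem_nhds (sub_lt_self (η a) hγ)
      (lt_add_of_pos_right (η a) hγ))] with ε hε hdown hdiag
  have hAB : ∀ a c, M ε a c ≤ B := fun a c => by
    rcases lt_trichotomy a c with h | rfl | h
    · linarith [hc ε hε a c h]
    · linarith [(hdiag a).2, htop a]
    · linarith [hdown a c h]
  have hgap : ∀ a ∈ T1, γ ≤ eig ε - M ε a a := fun a ha => by
    linarith [(hdiag a).2, (hdiag top).1, hgapη a (hT1 ▸ ha),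
      diag_le_of_mulVec_eq_smul (hnn ε hε) (hbpos ε hε) (hbeig ε hε) top]
  obtain ⟨hup, hlow⟩ := comparable_of_small_descents (hnn ε hε) (hbpos ε hε) (hbeig ε hε) hγ
    (by linarith) hAB hdown hδ.le hsmall hgap hi
  rw [show T1ᶜ = T0 by rw [hT1, compl_compl]] at hup hlow
  exact ⟨(hbpos ε hε i).le, Finset.sum_nonneg fun k _ =>
    mul_nonneg (simplePathSum_nonneg (hnn ε hε) _ _ _) (hbpos ε hε k).le, hup, hlow⟩

theorem stmt11 (m : ℕ) (hm : 0 < m) (M : ℝ → Matrix (Fin m) (Fin m) ℝ)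
    (hnn : ∀ ε > (0:ℝ), ∀ i j, 0 ≤ M ε i j)
    (hirr : ∀ ε > (0:ℝ), ∀ i j, ∃ n : ℕ, 0 < (M ε ^ n) i j)
    -- (M.1)
    (hM1 : ∀ i j, (∀ ε > (0:ℝ), 0 < M ε i j) ∨ (∀ ε > (0:ℝ), M ε i j = 0))
    -- (M.2)
    (hM2 : ∃ c > (0:ℝ), ∀ ε > (0:ℝ), ∀ i j, i < j → M ε i j ≤ c)
    -- (M.3)
    (hM3 : ∀ i j : Fin m, j < i → Tendsto (fun ε => M ε i j) (𝓝[>] 0) (𝓝 0))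
    -- (M.4)
    (η : Fin m → ℝ) (hη0 : ∀ i, 0 ≤ η i)
    (hM4 : ∀ i, Tendsto (fun ε => M ε i i) (𝓝[>] 0) (𝓝 (η i)))
    (T0 T1 : Finset (Fin m))
    (hT0 : ∀ i, i ∈ T0 ↔ ∀ j, η j ≤ η i) (hT1 : T1 = T0ᶜ)
    -- right Perron eigenvector, normalized
    (eig : ℝ → ℝ) (b : ℝ → Fin m → ℝ)
    (hbpos : ∀ ε > (0:ℝ), ∀ i, 0 < b ε i)
    (hbsum : ∀ ε > (0:ℝ), ∑ i, b ε i = 1)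
    (hbeig : ∀ ε > (0:ℝ), (M ε).mulVec (b ε) = eig ε • b ε) :
    ∀ i ∈ T1, AsympF (fun ε => b ε i)
      (fun ε => ∑ j ∈ T0, simplePathSum (M ε) i j T1 * b ε j) :=
  stmt11_general m M hnn hM2 hM3 η hM4 T0 T1 hT0 hT1 eig b hbpos hbeig
end
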